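/- Let α > −1/2 be real and z > 0. Then the modified Bessel function of the first kind, defined by the series I_α(z) = Σ_{m=0}^{∞} (z/2)^{2m+α}/(m!·Γ(m+α+1)), admits the integral representation I_α(z) = ((z/2)^α/(√π·Γ(α+1/2))) · ∫_{-1}^{1} (1−t²)^{α−1/2} e^{zt} dt. -/

import Mathlib

/-!
Expand `exp (z t)` in its power series and integrate term by term against the weight
`(1 - t²)^(α - 1/2)`, which is integrable on `[-1, 1]` exactly when `α > -1/2`; the series is
dominated by `(1 - t²)^(α - 1/2) · exp |z t|`. Odd moments of the even weight vanish, and the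
substitution `u = t²` turns the even ones into Beta integrals,
`∫_{-1}^{1} (1 - t²)^(α - 1/2) t^(2m) dt = B(m + 1/2, α + 1/2)`. Legendre's duplication formula,
in the form `Γ(m + 1/2) · 4^m · m! = (2m)! · √π`, then matches each term with the defining
series of `I_α(z)`.
-/

open MeasureTheory Real

/-- The modified Bessel function of the first kind, defined by its power series
`I_α(z) = Σ_{m=0}^∞ (z/2)^{2m+α}/(m!·Γ(m+α+1))`. -/
noncomputable def besselI (α z : ℝ) : ℝ :=
  ∑' m : ℕ, (z / 2) ^ ((2 * m : ℝ) + α) / ((Nat.factorial m : ℝ) * Real.Gamma ((m : ℝ) + α + 1))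

open Set intervalIntegral

open scoped Nat

lemma cpow_mul_one_sub_cpow_eq_ofReal {x : ℝ} (hx : x ∈ Ioo 0 1) (a b : ℝ) :
    (x : ℂ) ^ ((a : ℂ) - 1) * (1 - (x : ℂ)) ^ ((b : ℂ) - 1)
      = ((x ^ (a - 1) * (1 - x) ^ (b - 1) : ℝ) : ℂ) := by
  have : 0 ≤ 1 - x := by linarith [hx.2]
  push_cast [Complex.ofReal_cpow hx.1.le, Complex.ofReal_cpow this]
  rfl

lemma integrableOn_rpow_mul_one_sub_rpow {a b : ℝ} (ha : 0 < a) (hb : 0 < b) :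
    IntegrableOn (fun x : ℝ => x ^ (a - 1) * (1 - x) ^ (b - 1)) (Ioo 0 1) := by
  have h := Complex.betaIntegral_convergent (u := a) (v := b) (by simpa) (by simpa)
  rw [intervalIntegrable_iff_integrableOn_Ioo_of_le zero_le_one] at h
  refine IntegrableOn.congr_fun h.re (fun x hx => ?_) measurableSet_Ioo
  simp only [cpow_mul_one_sub_cpow_eq_ofReal hx, RCLike.re_to_complex, Complex.ofReal_re]

lemma integral_rpow_mul_one_sub_rpow {a b : ℝ} (ha : 0 < a) (hb : 0 < b) :
    ∫ x in Ioo (0 : ℝ) 1, x ^ (a - 1) * (1 - x) ^ (b - 1) = Gamma a * Gamma b / Gamma (a + b) := by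
  have h := Complex.betaIntegral_eq_Gamma_mul_div a b (by simpa) (by simpa)
  rw [Complex.betaIntegral, integral_of_le zero_le_one, integral_Ioc_eq_integral_Ioo,
    setIntegral_congr_fun measurableSet_Ioo (fun x hx => cpow_mul_one_sub_cpow_eq_ofReal hx a b),
    integral_complex_ofReal, ← Complex.ofReal_add, Complex.Gamma_ofReal, Complex.Gamma_ofReal,
    Complex.Gamma_ofReal] at h
  exact_mod_cast h

lemma image_sq_Ioo_zero_one : (fun t : ℝ => t ^ 2) '' Ioo 0 1 = Ioo 0 1 := by
  rw [(continuous_pow 2).continuousOn.image_Ioo_of_strictMonoOn zero_le_one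
    ((pow_left_strictMonoOn₀ two_ne_zero).mono Icc_subset_Ici_self)]
  norm_num

lemma hasDerivWithinAt_sq_Ioo : ∀ t ∈ Ioo (0 : ℝ) 1,
    HasDerivWithinAt (fun t : ℝ => t ^ 2) (2 * t) (Ioo 0 1) t := fun t _ => by
  simpa using (hasDerivAt_pow 2 t).hasDerivWithinAt

lemma injOn_sq_Ioo : InjOn (fun t : ℝ => t ^ 2) (Ioo 0 1) :=
  (pow_left_strictMonoOn₀ two_ne_zero).injOn.mono fun _ ht => mem_Ici.2 ht.1.le

lemma integrableOn_comp_sq_Ioo_zero_one_iff (g : ℝ → ℝ) :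
    IntegrableOn (fun t => 2 * t * g (t ^ 2)) (Ioo 0 1) ↔ IntegrableOn g (Ioo 0 1) := by
  conv_rhs => rw [← image_sq_Ioo_zero_one]
  rw [integrableOn_image_iff_integrableOn_abs_deriv_smul measurableSet_Ioo hasDerivWithinAt_sq_Ioo
    injOn_sq_Ioo]
  refine integrableOn_congr_fun (fun t ht => ?_) measurableSet_Ioo
  simp [abs_of_pos ht.1]

lemma integral_comp_sq_Ioo_zero_one (g : ℝ → ℝ) :
    ∫ t in Ioo 0 1, 2 * t * g (t ^ 2) = ∫ u in Ioo 0 1, g u := by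
  conv_rhs => rw [← image_sq_Ioo_zero_one]
  rw [integral_image_eq_integral_abs_deriv_smul measurableSet_Ioo hasDerivWithinAt_sq_Ioo
    injOn_sq_Ioo]
  refine setIntegral_congr_fun measurableSet_Ioo (fun t ht => ?_)
  simp [abs_of_pos ht.1]

lemma mul_sq_rpow_natCast_sub_half {t : ℝ} (ht : 0 < t) (m : ℕ) :
    t * (t ^ 2) ^ ((m : ℝ) - 1 / 2) = t ^ (2 * m) := by
  calc t * (t ^ 2) ^ ((m : ℝ) - 1 / 2) = t ^ (1 : ℝ) * t ^ (2 * ((m : ℝ) - 1 / 2)) := by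
        rw [rpow_one, ← rpow_natCast t 2, ← rpow_mul ht.le]; norm_num
    _ = t ^ ((2 * m : ℕ) : ℝ) := by rw [← rpow_add ht]; push_cast; ring_nf
    _ = t ^ (2 * m) := rpow_natCast t (2 * m)

theorem integral_neg_self_of_odd {f : ℝ → ℝ} (hf : ∀ x, f (-x) = -f x) (a : ℝ) :
    ∫ x in -a..a, f x = 0 := by
  have h := integral_comp_neg (a := -a) (b := a) f
  simp only [hf, intervalIntegral.integral_neg, neg_neg] at h
  linarith

theorem IntervalIntegrable.neg_of_even {f : ℝ → ℝ} {a : ℝ} (hf : ∀ x, f (-x) = f x)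
    (h : IntervalIntegrable f volume 0 a) : IntervalIntegrable f volume (-a) 0 := by
  simpa [hf] using ((IntervalIntegrable.iff_comp_neg (f := f) (a := 0) (b := a)).mp h).symm

theorem integral_neg_self_of_even {f : ℝ → ℝ} {a : ℝ} (hf : ∀ x, f (-x) = f x)
    (h : IntervalIntegrable f volume 0 a) : ∫ x in -a..a, f x = 2 * ∫ x in 0..a, f x := by
  rw [← integral_add_adjacent_intervals (h.neg_of_even hf) h, two_mul]
  congr 1
  simpa [hf] using (integral_comp_neg (a := 0) (b := a) f).symm

lemma eqOn_sq_subst_betaIntegrand (s : ℝ) (m : ℕ) :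
    EqOn (fun t : ℝ => 2 * t * ((t ^ 2) ^ ((m + 1 / 2 : ℝ) - 1) * (1 - t ^ 2) ^ ((s + 1) - 1)))
      (fun t => 2 * ((1 - t ^ 2) ^ s * t ^ (2 * m))) (Ioo 0 1) := fun t ht => by
  simp only [add_sub_cancel_right, show (m + 1 / 2 : ℝ) - 1 = m - 1 / 2 by ring]
  rw [← mul_sq_rpow_natCast_sub_half ht.1 m]
  ring

lemma integrableOn_one_sub_sq_rpow_mul_pow {s : ℝ} (hs : -1 < s) (m : ℕ) :
    IntegrableOn (fun t : ℝ => (1 - t ^ 2) ^ s * t ^ (2 * m)) (Ioo 0 1) := by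
  have h := (integrableOn_comp_sq_Ioo_zero_one_iff _).mpr
    (integrableOn_rpow_mul_one_sub_rpow (a := m + 1 / 2) (b := s + 1) (by positivity)
      (by linarith))
  rw [integrableOn_congr_fun (eqOn_sq_subst_betaIntegrand s m) measurableSet_Ioo] at h
  exact (integrable_const_mul_iff two_ne_zero.isUnit _).mp h

lemma integral_Ioo_one_sub_sq_rpow_mul_pow {s : ℝ} (hs : -1 < s) (m : ℕ) :
    2 * ∫ t in Ioo (0 : ℝ) 1, (1 - t ^ 2) ^ s * t ^ (2 * m)
      = Gamma (m + 1 / 2) * Gamma (s + 1) / Gamma (m + s + 3 / 2) := by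
  rw [← MeasureTheory.integral_const_mul, ← setIntegral_congr_fun measurableSet_Ioo
    (eqOn_sq_subst_betaIntegrand s m),
    integral_comp_sq_Ioo_zero_one fun u => u ^ ((m + 1 / 2 : ℝ) - 1) * (1 - u) ^ ((s + 1) - 1),
    integral_rpow_mul_one_sub_rpow (by positivity) (by linarith)]
  ring_nf

lemma intervalIntegrable_one_sub_sq_rpow_mul_pow {s : ℝ} (hs : -1 < s) (m : ℕ) :
    IntervalIntegrable (fun t : ℝ => (1 - t ^ 2) ^ s * t ^ (2 * m)) volume 0 1 :=
  (intervalIntegrable_iff_integrableOn_Ioo_of_le zero_le_one).mpr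
    (integrableOn_one_sub_sq_rpow_mul_pow hs m)

lemma intervalIntegrable_one_sub_sq_rpow {s : ℝ} (hs : -1 < s) :
    IntervalIntegrable (fun t : ℝ => (1 - t ^ 2) ^ s) volume (-1) 1 := by
  have h := intervalIntegrable_one_sub_sq_rpow_mul_pow hs 0
  simp only [mul_zero, pow_zero, mul_one] at h
  exact (h.neg_of_even (by simp)).trans h

lemma integral_one_sub_sq_rpow_mul_pow_two_mul {s : ℝ} (hs : -1 < s) (m : ℕ) :
    ∫ t in (-1 : ℝ)..1, (1 - t ^ 2) ^ s * t ^ (2 * m)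
      = Gamma (m + 1 / 2) * Gamma (s + 1) / Gamma (m + s + 3 / 2) := by
  rw [integral_neg_self_of_even (by simp [pow_mul])
    (intervalIntegrable_one_sub_sq_rpow_mul_pow hs m), integral_of_le zero_le_one,
    integral_Ioc_eq_integral_Ioo, integral_Ioo_one_sub_sq_rpow_mul_pow hs]

lemma integral_one_sub_sq_rpow_mul_pow_of_odd (s : ℝ) {n : ℕ} (hn : Odd n) :
    ∫ t in (-1 : ℝ)..1, (1 - t ^ 2) ^ s * t ^ n = 0 :=
  integral_neg_self_of_odd (fun t => by simp [hn.neg_pow]) 1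

lemma hasSum_pow_div_factorial_exp (x : ℝ) : HasSum (fun n => x ^ n / n !) (exp x) := by
  rw [exp_eq_exp_ℝ]
  exact NormedSpace.expSeries_div_hasSum_exp x

theorem hasSum_integral_mul_exp {g h : ℝ → ℝ} {a b : ℝ} (hg : IntervalIntegrable g volume a b)
    (hh : Continuous h) :
    HasSum (fun n => ∫ t in a..b, g t * (h t ^ n / n !)) (∫ t in a..b, g t * exp (h t)) := by
  refine hasSum_integral_of_dominated_convergence (fun n t => ‖g t‖ * (|h t| ^ n / n !))
    (fun n => hg.def'.aestronglyMeasurable.mul ((hh.pow n).div_const _).aestronglyMeasurable)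
    (fun n => ae_of_all _ fun t _ => by simp)
    (ae_of_all _ fun t _ => (Real.summable_pow_div_factorial |h t|).mul_left _) ?_
    (ae_of_all _ fun t _ => (hasSum_pow_div_factorial_exp (h t)).mul_left (g t))
  simp_rw [tsum_mul_left, (hasSum_pow_div_factorial_exp _).tsum_eq]
  exact hg.norm.mul_continuousOn (continuous_exp.comp hh.abs).continuousOn

theorem Gamma_nat_add_half_mul (m : ℕ) : Gamma (m + 1 / 2) * (4 ^ m * m !) = (2 * m)! * √π := by
  have h := Gamma_mul_Gamma_add_half (m + 1 / 2)
  rw [show (m + 1 / 2 + 1 / 2 : ℝ) = m + 1 by ring, Gamma_nat_eq_factorial,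
    show 2 * (m + 1 / 2 : ℝ) = (2 * m : ℕ) + 1 by push_cast; ring, Gamma_nat_eq_factorial,
    show 1 - ((2 * m : ℕ) + 1 : ℝ) = -(2 * m : ℕ) by ring, rpow_neg zero_le_two, rpow_natCast,
    pow_mul] at h
  rw [← mul_assoc, mul_right_comm, h]
  field_simp
  norm_num

theorem hasSum_integral_one_sub_sq_rpow_mul_exp {s : ℝ} (hs : -1 < s) (z : ℝ) :
    HasSum (fun m : ℕ => z ^ (2 * m) / (2 * m)! *
        (Gamma (m + 1 / 2) * Gamma (s + 1) / Gamma (m + s + 3 / 2)))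
      (∫ t in (-1 : ℝ)..1, (1 - t ^ 2) ^ s * exp (z * t)) := by
  have h := hasSum_integral_mul_exp (intervalIntegrable_one_sub_sq_rpow hs)
    (continuous_const_mul z)
  have hterm : ∀ n : ℕ, ∫ t in (-1 : ℝ)..1, (1 - t ^ 2) ^ s * ((z * t) ^ n / n !)
      = z ^ n / n ! * ∫ t in (-1 : ℝ)..1, (1 - t ^ 2) ^ s * t ^ n := fun n => by
    rw [← intervalIntegral.integral_const_mul]
    congr 1 with t
    ring
  simp_rw [hterm] at h
  rw [← (mul_right_injective₀ (two_ne_zero' ℕ)).hasSum_iff] at h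
  · simpa only [Function.comp_def, integral_one_sub_sq_rpow_mul_pow_two_mul hs] using h
  · rintro n hn
    have hodd : Odd n := Nat.not_even_iff_odd.mp fun ⟨k, hk⟩ => hn ⟨k, (by omega : 2 * k = n)⟩
    rw [integral_one_sub_sq_rpow_mul_pow_of_odd s hodd, mul_zero]

lemma rpow_natCast_add_eq_pow_mul_rpow (x y : ℝ) {n : ℕ} (h : n = 0 ∨ (n : ℝ) + y ≠ 0) :
    x ^ ((n : ℝ) + y) = x ^ n * x ^ y := by
  rcases eq_or_ne x 0 with rfl | hx
  · rcases h with rfl | h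
    · simp
    · rw [add_comm, rpow_add_natCast' le_rfl (by rwa [add_comm]), mul_comm]
  · rw [add_comm, rpow_add_natCast hx, mul_comm]

lemma besselI_term_eq {α : ℝ} (hα : -1 / 2 < α) (z : ℝ) (m : ℕ) :
    (z / 2) ^ ((2 * m : ℝ) + α) / ((m ! : ℝ) * Gamma (m + α + 1))
      = (z / 2) ^ α / (√π * Gamma (α + 1 / 2)) * (z ^ (2 * m) / (2 * m)! *
        (Gamma (m + 1 / 2) * Gamma (α - 1 / 2 + 1) / Gamma (m + (α - 1 / 2) + 3 / 2))) := by
  have hpow : (z / 2) ^ ((2 * m : ℝ) + α) = (z / 2) ^ (2 * m) * (z / 2) ^ α := by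
    have h := rpow_natCast_add_eq_pow_mul_rpow (z / 2) α (n := 2 * m)
    push_cast at h
    refine h ?_
    rcases m.eq_zero_or_pos with rfl | hm
    · simp
    · right
      have : (1 : ℝ) ≤ m := by exact_mod_cast hm
      linarith
  have hGamma := Gamma_nat_add_half_mul m
  have hGα : Gamma (α + 1 / 2) ≠ 0 := (Gamma_pos_of_pos (by linarith)).ne'
  have hGm : Gamma (m + α + 1) ≠ 0 :=
    (Gamma_pos_of_pos (by linarith [(Nat.cast_nonneg m : (0 : ℝ) ≤ m)])).ne'
  rw [show α - 1 / 2 + 1 = α + 1 / 2 by ring, show (m + (α - 1 / 2) + 3 / 2 : ℝ) = m + α + 1 by ring,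
    hpow, div_pow, show (2 : ℝ) ^ (2 * m) = 4 ^ m by rw [pow_mul]; norm_num,
    eq_div_of_mul_eq (by positivity) hGamma]
  generalize Gamma (α + 1 / 2) = G at hGα ⊢
  field_simp

theorem besselI_integral_repr_general (α z : ℝ) (hα : -1/2 < α) :
    besselI α z =
      (z / 2) ^ α / (Real.sqrt Real.pi * Real.Gamma (α + 1/2)) *
        ∫ t in (-1 : ℝ)..1, (1 - t ^ 2) ^ (α - 1/2) * Real.exp (z * t) := by
  have h := (hasSum_integral_one_sub_sq_rpow_mul_exp (s := α - 1 / 2) (by linarith) z).mul_left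
    ((z / 2) ^ α / (√π * Gamma (α + 1 / 2)))
  simp_rw [← besselI_term_eq hα z] at h
  exact h.tsum_eq

/-- Integral representation of the modified Bessel function of the
first kind for `α > −1/2` and `z > 0`. -/
theorem besselI_integral_repr (α z : ℝ) (hα : -1/2 < α) (hz : 0 < z) :
    besselI α z =
      (z / 2) ^ α / (Real.sqrt Real.pi * Real.Gamma (α + 1/2)) *
        ∫ t in (-1 : ℝ)..1, (1 - t ^ 2) ^ (α - 1/2) * Real.exp (z * t) :=
  besselI_integral_repr_general α z hα
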